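/- arXiv:2510.03499 — 2 statements merged into one kernel-verified Lean document; each statement's English description precedes it below -/
import Mathlib

section
/- Let A = (a'_1, ..., a'_s) be a sequence of positive integers and n ≥ 0. Then gon(B_{A;n}) ≤ lcm(a'_1, ..., a'_s). -/
/-!
Write `L` for the lcm and `a_i` for the size of the bunch between `v_i` and `v_{i+1}`.
Firing the set `{v_0, …, v_i}` exactly `L / a_i` times sends `L` chips across that bunch
and changes nothing else, so `L·v_i ∼ L·v_{i+1}`. Hence `L·v_0` is equivalent to `L·v_j`
for every `j`, and it is a positive-rank divisor of degree `L`.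
-/

open Finset

attribute [local instance] Classical.propDecidable

noncomputable section

/-- A finite loopless multigraph on vertex type `V`, given by a symmetric
edge-multiplicity function: `mul u v` is the number of edges joining `u` and `v`. -/
structure Multigraph (V : Type) [Fintype V] where
  mul : V → V → ℕ
  symm : ∀ u v, mul u v = mul v u
  loopless : ∀ v, mul v v = 0

namespace Multigraph

variable {V : Type} [Fintype V]

/-- The underlying simple graph of a multigraph. -/
def underlying (G : Multigraph V) : SimpleGraph V where
  Adj u v := 0 < G.mul u v
  symm := by
    constructor
    intro u v h
    rwa [G.symm] at h
  loopless := by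
    constructor
    intro v h
    simp [G.loopless] at h

/-- A multigraph is connected if its underlying simple graph is. -/
def Connected (G : Multigraph V) : Prop := G.underlying.Connected

/-- A banana tree is a multigraph whose underlying simple graph is a tree. -/
def IsBananaTree (G : Multigraph V) : Prop := G.underlying.IsTree

/-- The valence (degree) of a vertex. -/
def valence (G : Multigraph V) (v : V) : ℕ := ∑ w, G.mul v w

/-- The number of edges of a multigraph. -/
def edgeCount (G : Multigraph V) : ℕ := (∑ u, ∑ v, G.mul u v) / 2

/-- The genus (first Betti number) `|E| - |V| + 1` of a connected multigraph. -/
def genus (G : Multigraph V) : ℕ := G.edgeCount + 1 - Fintype.card V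

/-- The degree of a divisor: the total number of chips. -/
def degree (D : V → ℤ) : ℤ := ∑ v, D v

/-- A divisor is effective if it is nonnegative everywhere. -/
def Effective (D : V → ℤ) : Prop := ∀ v, 0 ≤ D v

/-- Linear equivalence of divisors: `D'` is obtained from `D` by a finite sequence of
chip-firing moves, equivalently (for connected graphs) via an integral firing script `σ`. -/
def LinEquiv (G : Multigraph V) (D D' : V → ℤ) : Prop :=
  ∃ σ : V → ℤ, ∀ v, D' v = D v + ∑ w, (G.mul v w : ℤ) * (σ w - σ v)

/-- A divisor has positive rank if for every vertex `v` it is linearly equivalent to an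
effective divisor placing at least one chip on `v`. -/
def PosRank (G : Multigraph V) (D : V → ℤ) : Prop :=
  ∀ v, ∃ D', G.LinEquiv D D' ∧ Effective D' ∧ 1 ≤ D' v

/-- The (divisorial) gonality: the minimum degree of a positive-rank effective divisor. -/
def gonality (G : Multigraph V) : ℕ :=
  sInf {d : ℕ | ∃ D : V → ℤ, Effective D ∧ G.PosRank D ∧ degree D = (d : ℤ)}

/-- `f(G, v, k)`: the minimum degree of an effective divisor `D` on `G` such that
`D + k·v` has positive rank. -/
def fmin (G : Multigraph V) (v : V) (k : ℕ) : ℕ :=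
  sInf {d : ℕ | ∃ D : V → ℤ, Effective D ∧
    G.PosRank (fun u => D u + if u = v then (k : ℤ) else 0) ∧ degree D = (d : ℤ)}

/-- Delete a vertex from a multigraph. -/
def deleteVertex (G : Multigraph V) (v : V) : Multigraph {u : V // u ≠ v} where
  mul a b := G.mul a.1 b.1
  symm := fun a b => G.symm a.1 b.1
  loopless := fun a => G.loopless a.1

/-- Delete one single edge between `u` and `w` (if any) from a multigraph. -/
def deleteOneEdge (G : Multigraph V) (u w : V) : Multigraph V where
  mul x y := if (x = u ∧ y = w) ∨ (x = w ∧ y = u) then G.mul x y - 1 else G.mul x y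
  symm := by
    intro x y
    by_cases h : (x = u ∧ y = w) ∨ (x = w ∧ y = u)
    · have h' : (y = u ∧ x = w) ∨ (y = w ∧ x = u) := by tauto
      simp [h, h', G.symm x y]
    · have h' : ¬((y = u ∧ x = w) ∨ (y = w ∧ x = u)) := by tauto
      simp [h, h', G.symm x y]
  loopless := by
    intro v
    by_cases h : (v = u ∧ v = w) ∨ (v = w ∧ v = u)
    · simp [h, G.loopless]
    · simp [h, G.loopless]

/-- The adjacency move from `v` to `w` on a banana tree: the subset-firing move at the
connected component of `v` after removing the `v`-`w` edge bunch.  Its net effect is to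
move `|E(v,w)|` chips from `v` to `w`. -/
def adjMove (G : Multigraph V) (v w : V) (D : V → ℤ) : V → ℤ :=
  fun u => if u = v then D u - (G.mul v w : ℤ)
    else if u = w then D u + (G.mul v w : ℤ) else D u

/-- A single legal adjacency move: both divisors are effective and the second is
obtained from the first by an adjacency move between adjacent vertices. -/
def LegalAdjStep (G : Multigraph V) (D D' : V → ℤ) : Prop :=
  ∃ v w, G.underlying.Adj v w ∧ Effective D ∧ Effective D' ∧ D' = G.adjMove v w D

/-- A scramble: a collection of nonempty vertex sets (eggs), each inducing a connected
subgraph. -/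
def IsScramble (G : Multigraph V) (S : Finset (Finset V)) : Prop :=
  ∀ X ∈ S, X.Nonempty ∧ (G.underlying.induce (X : Set V)).Connected

/-- A hitting set of a scramble: a set of vertices meeting every egg. -/
def IsHittingSet (S : Finset (Finset V)) (T : Finset V) : Prop :=
  ∀ X ∈ S, (X ∩ T).Nonempty

/-- The hitting number of a scramble. -/
def hittingNumber (S : Finset (Finset V)) : ℕ∞ :=
  sInf {t : ℕ∞ | ∃ T : Finset V, IsHittingSet S T ∧ (T.card : ℕ∞) = t}

/-- The simple graph remaining after removing `c u w` of the edges of each bunch. -/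
def cutGraph (G : Multigraph V) (c : V → V → ℕ) : SimpleGraph V where
  Adj u w := u ≠ w ∧ c u w < G.mul u w ∧ c w u < G.mul w u
  symm := ⟨fun u w h => ⟨h.1.symm, h.2.2, h.2.1⟩⟩
  loopless := ⟨fun u h => h.1 rfl⟩

/-- `c` describes an egg-cut of the scramble `S`: a set of edges of `G` (given by the
number `c u w` of edges removed from each bunch) whose removal leaves at least two
connected components each completely containing an egg. -/
def IsEggCut (G : Multigraph V) (S : Finset (Finset V)) (c : V → V → ℕ) : Prop :=
  (∀ u w, c u w = c w u) ∧ (∀ u w, c u w ≤ G.mul u w) ∧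
  ∃ X₁ ∈ S, ∃ X₂ ∈ S,
    (∀ x ∈ X₁, ∀ y ∈ X₁, (G.cutGraph c).Reachable x y) ∧
    (∀ x ∈ X₂, ∀ y ∈ X₂, (G.cutGraph c).Reachable x y) ∧
    (∀ x ∈ X₁, ∀ y ∈ X₂, ¬ (G.cutGraph c).Reachable x y)

/-- The egg-cut number of a scramble (`⊤` if no egg-cut exists). -/
def eggCutNumber (G : Multigraph V) (S : Finset (Finset V)) : ℕ∞ :=
  sInf {t : ℕ∞ | ∃ c : V → V → ℕ, G.IsEggCut S c ∧
    ((∑ u, ∑ w, c u w : ℕ) : ℕ∞) = 2 * t}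

/-- The order of a scramble: the minimum of its hitting number and egg-cut number. -/
def scrambleOrder (G : Multigraph V) (S : Finset (Finset V)) : ℕ∞ :=
  min (hittingNumber S) (G.eggCutNumber S)

/-- The scramble number of a multigraph: the maximum order of a scramble on it. -/
def scrambleNumber (G : Multigraph V) : ℕ∞ :=
  sSup {m : ℕ∞ | ∃ S : Finset (Finset V), G.IsScramble S ∧ G.scrambleOrder S = m}

/-- The weight of a node `t` in a tree-cut decomposition `(T, X)`: the number of vertices
mapped to `t` plus the number of edges routed through `t` with neither endpoint mapped
to `t`. -/
def nodeWeight (G : Multigraph V) {N : Type} [Fintype N] (T : SimpleGraph N)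
    (X : V → N) (t : N) : ℕ :=
  (Finset.univ.filter fun v => X v = t).card +
    (∑ u, ∑ w, if X u ≠ t ∧ X w ≠ t ∧
        ¬ (T.deleteEdges {e | t ∈ e}).Reachable (X u) (X w)
      then G.mul u w else 0) / 2

/-- The weight of a link `pq` in a tree-cut decomposition `(T, X)`: the number of edges
of `G` routed through that link. -/
def linkWeight (G : Multigraph V) {N : Type} (T : SimpleGraph N)
    (X : V → N) (p q : N) : ℕ :=
  (∑ u, ∑ w, if ¬ (T.deleteEdges {s(p, q)}).Reachable (X u) (X w)
    then G.mul u w else 0) / 2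

/-- The width of a tree-cut decomposition `(T, X)`: the maximum of all node and link
weights. -/
def tcdWidth (G : Multigraph V) {N : Type} [Fintype N] (T : SimpleGraph N)
    (X : V → N) : ℕ :=
  max (Finset.univ.sup fun t => G.nodeWeight T X t)
      (Finset.univ.sup fun p : N × N =>
        if T.Adj p.1 p.2 then G.linkWeight T X p.1 p.2 else 0)

/-- The screewidth of a multigraph: the minimum width of a tree-cut decomposition. -/
def screewidth (G : Multigraph V) : ℕ :=
  sInf {w : ℕ | ∃ (m : ℕ) (T : SimpleGraph (Fin m)), T.IsTree ∧
    ∃ X : V → Fin m, G.tcdWidth T X = w}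

/-- The banana path on `n+1` vertices `v_0, …, v_n`, with `a i` edges joining
`v_i` and `v_{i+1}` (for `0 ≤ i < n`). -/
def bananaPath (n : ℕ) (a : ℕ → ℕ) : Multigraph (Fin (n + 1)) where
  mul i j := if i.val + 1 = j.val then a i.val else if j.val + 1 = i.val then a j.val else 0
  symm := by
    intro u v
    split_ifs <;> first | rfl | (exfalso; omega)
  loopless := by
    intro v
    have h : ¬ (v.val + 1 = v.val) := by omega
    simp [h]

/-- The banana star with central vertex `Sum.inl ()` and, for each `i : Fin k`,
`r i` leaves joined to the center by `a i` parallel edges. -/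
def bananaStar (k : ℕ) (a r : Fin k → ℕ) :
    Multigraph (Unit ⊕ (Σ i : Fin k, Fin (r i))) where
  mul x y :=
    match x, y with
    | Sum.inl _, Sum.inr ⟨i, _⟩ => a i
    | Sum.inr ⟨i, _⟩, Sum.inl _ => a i
    | _, _ => 0
  symm := by
    intro u v
    rcases u with u | ⟨i, li⟩ <;> rcases v with v | ⟨j, lj⟩ <;> rfl
  loopless := by
    intro v
    rcases v with v | ⟨i, li⟩ <;> rfl

end Multigraph

namespace Multigraph

variable {V : Type} [Fintype V]

theorem LinEquiv.refl (G : Multigraph V) (D : V → ℤ) : G.LinEquiv D D :=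
  ⟨0, fun v => by simp⟩

theorem LinEquiv.trans {G : Multigraph V} {D D' D'' : V → ℤ}
    (h : G.LinEquiv D D') (h' : G.LinEquiv D' D'') : G.LinEquiv D D'' := by
  obtain ⟨σ, hσ⟩ := h
  obtain ⟨τ, hτ⟩ := h'
  refine ⟨σ + τ, fun v => ?_⟩
  simp only [hτ, hσ, Pi.add_apply, add_assoc, ← Finset.sum_add_distrib]
  congr 2 with w
  ring

/-- The firing script is `c` times the indicator of `S`. -/
theorem linEquiv_add_single_sub_single_of_cut [DecidableEq V] (G : Multigraph V)
    {S : Set V} {u w : V} (hu : u ∈ S) (hw : w ∉ S)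
    (hcut : ∀ x ∈ S, ∀ y ∉ S, G.mul x y ≠ 0 → x = u ∧ y = w)
    (D : V → ℤ) (c : ℤ) :
    G.LinEquiv D (D + Pi.single w (c * G.mul u w) - Pi.single u (c * G.mul u w)) := by
  have huw : u ≠ w := fun h => hw (h ▸ hu)
  refine ⟨fun x => if x ∈ S then c else 0, fun v => ?_⟩
  simp only [Pi.sub_apply, Pi.add_apply, add_sub_assoc, add_right_inj]
  by_cases hv : v ∈ S
  · rw [Finset.sum_eq_single w]
    · by_cases hvu : v = u
      · subst hvu
        simp [hv, hw, huw, mul_comm c]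
      · have : G.mul v w = 0 := by_contra fun h => hvu (hcut v hv w hw h).1
        have hvw : v ≠ w := fun h => hw (h ▸ hv)
        simp [this, hvu, hvw]
    · intro y _ hyw
      by_cases hy : y ∈ S
      · simp [hy, hv]
      · have : G.mul v y = 0 := by_contra fun h => hyw (hcut v hv y hy h).2
        simp [this]
    · simp
  · rw [Finset.sum_eq_single u]
    · by_cases hvw : v = w
      · subst hvw
        simp [hv, hu, huw.symm, G.symm v u, mul_comm c]
      · have : G.mul u v = 0 := by_contra fun h => hvw (hcut u hu v hv h).2
        have hvu : v ≠ u := fun h => hv (h ▸ hu)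
        simp [G.symm v u, this, hvw, hvu]
    · intro y _ hyu
      by_cases hy : y ∈ S
      · have : G.mul y v = 0 := by_contra fun h => hyu (hcut y hy v hv h).1
        simp [G.symm v y, this]
      · simp [hy, hv]
    · simp

theorem gonality_le_of_linEquiv_single [DecidableEq V] (G : Multigraph V) (v₀ : V) {k : ℕ}
    (hk : 0 < k) (h : ∀ v, G.LinEquiv (Pi.single v₀ (k : ℤ)) (Pi.single v k)) :
    G.gonality ≤ k := by
  have single_effective : ∀ v : V, Effective (Pi.single v (k : ℤ)) := fun v u => by
    by_cases huv : u = v <;> simp [huv]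
  refine Nat.sInf_le ⟨Pi.single v₀ k, single_effective v₀, fun v => ?_, by simp [degree]⟩
  exact ⟨Pi.single v k, h v, single_effective v, by simp; omega⟩

theorem bananaPath_mul_ne_zero {n : ℕ} {a : ℕ → ℕ} {x y : Fin (n + 1)}
    (h : (bananaPath n a).mul x y ≠ 0) : x.val + 1 = y.val ∨ y.val + 1 = x.val := by
  simp only [bananaPath] at h
  split_ifs at h <;> omega

theorem bananaPath_linEquiv_single_succ {n : ℕ} {a : ℕ → ℕ} {L i : ℕ} (hi : i < n)
    (hdvd : a i ∣ L) :
    (bananaPath n a).LinEquiv (Pi.single ⟨i, by omega⟩ (L : ℤ))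
      (Pi.single ⟨i + 1, by omega⟩ (L : ℤ)) := by
  have key := linEquiv_add_single_sub_single_of_cut (bananaPath n a)
    (S := {x | x.val ≤ i}) (u := ⟨i, by omega⟩) (w := ⟨i + 1, by omega⟩)
    (by simp) (by simp) (fun x hx y hy hxy => by
      simp only [Set.mem_ofPred_eq, not_le] at hx hy
      have := bananaPath_mul_ne_zero hxy
      constructor <;> ext <;> simp only <;> omega)
    (Pi.single ⟨i, by omega⟩ (L : ℤ)) (L / a i : ℕ)
  have hmul :
      ((L / a i : ℕ) : ℤ) * (bananaPath n a).mul ⟨i, by omega⟩ ⟨i + 1, by omega⟩ = L := by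
    rw [show (bananaPath n a).mul ⟨i, _⟩ ⟨i + 1, _⟩ = a i by simp [bananaPath], ← Nat.cast_mul,
      Nat.div_mul_cancel hdvd]
  rwa [hmul, add_sub_cancel_left] at key

theorem bananaPath_linEquiv_single_zero {n : ℕ} {a : ℕ → ℕ} {L : ℕ}
    (hdvd : ∀ i < n, a i ∣ L) (j : Fin (n + 1)) :
    (bananaPath n a).LinEquiv (Pi.single 0 (L : ℤ)) (Pi.single j (L : ℤ)) := by
  obtain ⟨j, hj⟩ := j
  induction j with
  | zero => exact LinEquiv.refl _ _
  | succ i ih =>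
    exact (ih (by omega)).trans (bananaPath_linEquiv_single_succ (by omega) (hdvd i (by omega)))

theorem gonality_bananaPath_le {n : ℕ} {a : ℕ → ℕ} {L : ℕ} (hL : 0 < L)
    (hdvd : ∀ i < n, a i ∣ L) : (bananaPath n a).gonality ≤ L :=
  gonality_le_of_linEquiv_single _ 0 hL (bananaPath_linEquiv_single_zero hdvd)

end Multigraph

open Multigraph in
/-- The gonality of the `A`-monoculture banana path on `n+1` vertices is at
most `lcm(a_1, …, a_s)`. -/
theorem monoculture_gonality_le_lcm
    (s : ℕ) (hs : 0 < s) (a : ℕ → ℕ) (ha : ∀ i < s, 0 < a i) (n : ℕ) :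
    (bananaPath n (fun i => a (i % s))).gonality ≤ (Finset.range s).lcm a := by
  have hlcm_pos : 0 < (Finset.range s).lcm a := by
    refine Nat.pos_of_ne_zero fun h => ?_
    obtain ⟨i, hi, hai⟩ := Finset.lcm_eq_zero_iff.mp h
    exact (ha i (Finset.mem_range.mp hi)).ne' hai
  exact gonality_bananaPath_le hlcm_pos fun i _ =>
    Finset.dvd_lcm (Finset.mem_range.mpr (Nat.mod_lt i hs))
end
end

section
/- Let a_1 > a_2 > ... > a_k ≥ 1 be integers, let r_1, ..., r_k be positive integers, and let G = S_{(a_1^{r_1}, ..., a_k^{r_k})} be the corresponding banana star. Then sn(G) = max over 1 ≤ ℓ ≤ k of min{ a_ℓ, 1 + Σ_{i=1}^{ℓ} r_i }. -/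
open Finset

attribute [local instance] Classical.propDecidable

noncomputable section

/-!
An egg of a banana star that avoids the centre is a single leaf. Upper bound: let `{w}` be a
leaf egg of largest class `ℓ`. Either `{w}` meets every egg, so the order is at most `1`, or
cutting the `a_ℓ` edges at `w` separates `{w}` from another egg, while the centre together with
the leaves of class `≤ ℓ` meets every egg. Lower bound: the singletons of the centre and of the
leaves of class `≤ ℓ` form a scramble whose hitting number is its size, and every egg-cut of it
must sever the whole bunch at one of these leaves, which has at least `a_ℓ` edges.
-/

theorem SimpleGraph.IsIsolated.eq_of_reachable {W : Type*} {H : SimpleGraph W} {v w : W}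
    (hv : H.IsIsolated v) (h : H.Reachable v w) : w = v := by
  obtain ⟨p⟩ := h
  cases p with
  | nil => rfl
  | cons hadj _ => exact absurd hadj (hv _)

theorem Finset.add_le_sum_sum {W M : Type*} [Fintype W] [AddCommMonoid M] [PartialOrder M]
    [IsOrderedAddMonoid M] [CanonicallyOrderedAdd M] (c : W → W → M) {x y : W} (hxy : x ≠ y) :
    c x y + c y x ≤ ∑ u, ∑ w, c u w :=
  calc c x y + c y x ≤ (∑ w, c x w) + ∑ w, c y w :=
        add_le_add (single_le_sum (fun _ _ => zero_le) (mem_univ y))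
          (single_le_sum (fun _ _ => zero_le) (mem_univ x))
    _ = ∑ u ∈ {x, y}, ∑ w, c u w := by rw [sum_pair hxy]
    _ ≤ ∑ u, ∑ w, c u w := sum_le_sum_of_subset (subset_univ _)

namespace Multigraph

variable {V : Type}

theorem isHittingSet_iff {S : Finset (Finset V)} {T : Finset V} :
    IsHittingSet S T ↔ ∀ X ∈ S, ∃ x ∈ X, x ∈ T := by
  simp only [IsHittingSet, Finset.Nonempty, mem_inter]

theorem hittingNumber_le_card {S : Finset (Finset V)} {T : Finset V} (hT : IsHittingSet S T) :
    hittingNumber S ≤ T.card :=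
  sInf_le ⟨T, hT, rfl⟩

theorem hittingNumber_image_singleton [DecidableEq V] (T : Finset V) :
    hittingNumber (T.image singleton) = T.card := by
  refine le_antisymm (hittingNumber_le_card (isHittingSet_iff.mpr ?_)) (le_sInf ?_)
  · simp only [mem_image]
    rintro _ ⟨x, hx, rfl⟩
    exact ⟨x, mem_singleton_self x, hx⟩
  · rintro _ ⟨T', hT', rfl⟩
    have hsub : T ⊆ T' := fun x hx => by
      obtain ⟨y, hy, hyT'⟩ := isHittingSet_iff.mp hT' {x} (mem_image_of_mem _ hx)
      exact mem_singleton.mp hy ▸ hyT'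
    exact_mod_cast card_le_card hsub

variable [Fintype V]

theorem isScramble_image_singleton [DecidableEq V] (G : Multigraph V) (T : Finset V) :
    G.IsScramble (T.image singleton) := by
  simp only [IsScramble, mem_image]
  rintro _ ⟨x, -, rfl⟩
  refine ⟨singleton_nonempty x, ?_⟩
  rw [coe_singleton, SimpleGraph.induce_singleton_eq_top]
  exact SimpleGraph.connected_top

variable {G : Multigraph V} {S : Finset (Finset V)}

theorem eggCutNumber_le {c : V → V → ℕ} (hc : G.IsEggCut S c) {m : ℕ}
    (hm : ∑ u, ∑ w, c u w = 2 * m) : G.eggCutNumber S ≤ m :=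
  sInf_le ⟨c, hc, by rw [hm]; push_cast; rfl⟩

theorem le_eggCutNumber {m : ℕ} (h : ∀ c, G.IsEggCut S c → 2 * m ≤ ∑ u, ∑ w, c u w) :
    (m : ℕ∞) ≤ G.eggCutNumber S := by
  refine le_sInf ?_
  rintro t ⟨c, hc, ht⟩
  induction t using ENat.recTopCoe with
  | top => exact le_top
  | coe n =>
    have hsum : ∑ u, ∑ w, c u w = 2 * n := by exact_mod_cast ht
    have hm := h c hc
    exact_mod_cast (by omega : m ≤ n)

def bunchCut (G : Multigraph V) (u v : V) : V → V → ℕ :=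
  fun x y => if s(x, y) = s(u, v) then G.mul x y else 0

theorem bunchCut_symm (u v x y : V) : G.bunchCut u v x y = G.bunchCut u v y x := by
  simp only [bunchCut, Sym2.eq_swap (a := x), G.symm x y]

theorem bunchCut_le (u v x y : V) : G.bunchCut u v x y ≤ G.mul x y := by
  unfold bunchCut; split_ifs <;> simp

theorem sum_bunchCut {u v : V} (huv : u ≠ v) :
    ∑ x, ∑ y, G.bunchCut u v x y = 2 * G.mul u v := by
  have hsplit : ∀ x y, G.bunchCut u v x y =
      (if x = u ∧ y = v then G.mul x y else 0) + (if x = v ∧ y = u then G.mul x y else 0) := by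
    intro x y
    by_cases h₁ : x = u ∧ y = v
    · simp [bunchCut, h₁, huv]
    · by_cases h₂ : x = v ∧ y = u
      · simp [bunchCut, h₂, huv.symm]
      · simp [bunchCut, h₁, h₂]
  simp only [hsplit, sum_add_distrib, ite_and, sum_ite_irrel, sum_const_zero, sum_ite_eq',
    mem_univ, if_true, G.symm v u]
  ring

theorem cutGraph_bunchCut (u v : V) :
    G.cutGraph (G.bunchCut u v) = G.underlying.deleteEdges {s(u, v)} := by
  ext x y
  simp only [cutGraph, bunchCut, SimpleGraph.deleteEdges_adj, underlying, Set.mem_singleton_iff]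
  by_cases h : s(x, y) = s(u, v)
  · simp [h, Sym2.eq_swap (a := y) ▸ h]
  · have h' : s(y, x) ≠ s(u, v) := Sym2.eq_swap (a := y) ▸ h
    simp only [h, h', if_false, G.symm y x]
    exact ⟨fun hxy => ⟨hxy.2.1, id⟩,
      fun hxy => ⟨G.underlying.ne_of_adj hxy.1, hxy.1, hxy.1⟩⟩

section BananaStar

variable {k : ℕ} {a r : Fin k → ℕ}

theorem bananaStar_adj_inl_inr (ha : ∀ i, 1 ≤ a i) (w : Σ i : Fin k, Fin (r i)) :
    (bananaStar k a r).underlying.Adj (Sum.inl ()) (Sum.inr w) :=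
  ha w.1

theorem bananaStar_exists_eq_singleton_inr {X : Finset (Unit ⊕ Σ i : Fin k, Fin (r i))}
    (hX : X.Nonempty ∧ ((bananaStar k a r).underlying.induce (X : Set _)).Connected)
    (hc : Sum.inl () ∉ X) : ∃ w, X = {Sum.inr w} := by
  obtain ⟨⟨x, hx⟩, hconn⟩ := hX
  have hbot : (bananaStar k a r).underlying.induce (X : Set _) = ⊥ := by
    ext ⟨u, hu⟩ ⟨v, hv⟩
    rcases u with ⟨⟩ | u
    · exact absurd hu hc
    rcases v with ⟨⟩ | v
    · exact absurd hv hc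
    exact iff_of_false (lt_irrefl 0) id
  have huniq : ∀ y ∈ X, y = x := fun y hy => by
    have hreach := hconn.preconnected ⟨y, hy⟩ ⟨x, hx⟩
    rw [hbot, SimpleGraph.reachable_bot] at hreach
    exact congrArg Subtype.val hreach
  rcases x with ⟨⟩ | w
  · exact absurd hx hc
  · exact ⟨w, eq_singleton_iff_unique_mem.mpr ⟨hx, huniq⟩⟩

theorem bananaStar_isHittingSet {S : Finset (Finset (Unit ⊕ Σ i : Fin k, Fin (r i)))}
    (hS : (bananaStar k a r).IsScramble S) {T : Finset (Unit ⊕ Σ i : Fin k, Fin (r i))}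
    (hc : Sum.inl () ∈ T) (hleaf : ∀ w, {Sum.inr w} ∈ S → Sum.inr w ∈ T) :
    IsHittingSet S T := by
  refine isHittingSet_iff.mpr fun X hX => ?_
  by_cases hcX : Sum.inl () ∈ X
  · exact ⟨_, hcX, hc⟩
  · obtain ⟨w, rfl⟩ := bananaStar_exists_eq_singleton_inr (hS X hX) hcX
    exact ⟨_, mem_singleton_self _, hleaf w hX⟩

theorem bananaStar_isIsolated_deleteEdges (w₀ : Σ i : Fin k, Fin (r i)) :
    ((bananaStar k a r).underlying.deleteEdges {s(Sum.inl (), Sum.inr w₀)}).IsIsolated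
      (Sum.inr w₀) := by
  rintro (⟨⟩ | z) h
  · simp [Sym2.eq_swap] at h
  · exact lt_irrefl 0 (SimpleGraph.deleteEdges_adj.mp h).1

theorem bananaStar_reachable_deleteEdges (ha : ∀ i, 1 ≤ a i) {w₀ : Σ i : Fin k, Fin (r i)}
    {x : Unit ⊕ Σ i : Fin k, Fin (r i)} (hx : x ≠ Sum.inr w₀) :
    ((bananaStar k a r).underlying.deleteEdges {s(Sum.inl (), Sum.inr w₀)}).Reachable
      (Sum.inl ()) x := by
  rcases x with ⟨⟩ | w
  · rfl
  · refine SimpleGraph.Adj.reachable ⟨bananaStar_adj_inl_inr ha w, ?_⟩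
    simpa using hx

theorem bananaStar_eggCutNumber_le (ha : ∀ i, 1 ≤ a i)
    {S : Finset (Finset (Unit ⊕ Σ i : Fin k, Fin (r i)))} {w₀ : Σ i : Fin k, Fin (r i)}
    {Y : Finset (Unit ⊕ Σ i : Fin k, Fin (r i))} (hw₀ : {Sum.inr w₀} ∈ S) (hY : Y ∈ S)
    (hYw₀ : Sum.inr w₀ ∉ Y) : (bananaStar k a r).eggCutNumber S ≤ a w₀.1 := by
  have hcut := (bananaStar k a r).cutGraph_bunchCut (Sum.inl ()) (Sum.inr w₀)
  refine eggCutNumber_le ⟨bunchCut_symm _ _, bunchCut_le _ _, _, hw₀, Y, hY, ?_, ?_, ?_⟩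
    (sum_bunchCut (Sum.inl_ne_inr (a := ())))
  · simp
  · intro x hx y hy
    rw [hcut]
    exact (bananaStar_reachable_deleteEdges ha (ne_of_mem_of_not_mem hx hYw₀)).symm.trans
      (bananaStar_reachable_deleteEdges ha (ne_of_mem_of_not_mem hy hYw₀))
  · intro x hx y hy hxy
    rw [mem_singleton] at hx
    subst hx
    rw [hcut] at hxy
    exact hYw₀ ((bananaStar_isIsolated_deleteEdges w₀).eq_of_reachable hxy ▸ hy)

theorem bananaStar_exists_severed_bunch {S : Finset (Finset (Unit ⊕ Σ i : Fin k, Fin (r i)))}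
    (hS : ∀ X ∈ S, ∃ x, X = {x}) {c : (Unit ⊕ Σ i : Fin k, Fin (r i)) → _ → ℕ}
    (hc : (bananaStar k a r).IsEggCut S c) :
    ∃ w, {Sum.inr w} ∈ S ∧ a w.1 ≤ c (Sum.inl ()) (Sum.inr w) := by
  obtain ⟨hsymm, -, X₁, hX₁, X₂, hX₂, -, -, hsep⟩ := hc
  by_contra! hlt
  have hreach : ∀ x, {x} ∈ S → ((bananaStar k a r).cutGraph c).Reachable (Sum.inl ()) x := by
    rintro (⟨⟩ | w) hw
    · rfl
    · have hw' := hlt w hw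
      exact SimpleGraph.Adj.reachable ⟨Sum.inl_ne_inr, hw', by rwa [hsymm]⟩
  obtain ⟨x₁, rfl⟩ := hS X₁ hX₁
  obtain ⟨x₂, rfl⟩ := hS X₂ hX₂
  exact hsep x₁ (mem_singleton_self _) x₂ (mem_singleton_self _)
    ((hreach x₁ hX₁).symm.trans (hreach x₂ hX₂))

def centerAndLeavesUpTo (r : Fin k → ℕ) (ℓ : Fin k) :
    Finset (Unit ⊕ Σ i : Fin k, Fin (r i)) :=
  insert (Sum.inl ()) ((univ.filter fun w : Σ i : Fin k, Fin (r i) => w.1 ≤ ℓ).image Sum.inr)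

theorem inr_mem_centerAndLeavesUpTo {ℓ : Fin k} {w : Σ i : Fin k, Fin (r i)} :
    Sum.inr w ∈ centerAndLeavesUpTo r ℓ ↔ w.1 ≤ ℓ := by
  simp [centerAndLeavesUpTo]

theorem card_centerAndLeavesUpTo (ℓ : Fin k) :
    (centerAndLeavesUpTo r ℓ).card = 1 + ∑ i, if i ≤ ℓ then r i else 0 := by
  rw [centerAndLeavesUpTo, card_insert_of_notMem (by simp),
    card_image_of_injective _ Sum.inr_injective, card_filter, ← univ_sigma_univ, sum_sigma,
    add_comm]
  congr 1
  refine sum_congr rfl fun i _ => ?_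
  split_ifs <;> simp

def bananaStarBound (a r : Fin k → ℕ) (ℓ : Fin k) : ℕ :=
  min (a ℓ) (1 + ∑ i, if i ≤ ℓ then r i else 0)

theorem one_le_bananaStarBound (ha : ∀ i, 1 ≤ a i) (ℓ : Fin k) :
    1 ≤ bananaStarBound a r ℓ :=
  le_min (ha ℓ) (Nat.le_add_right 1 _)

theorem bananaStar_scrambleOrder_le (ha : ∀ i, 1 ≤ a i)
    {S : Finset (Finset (Unit ⊕ Σ i : Fin k, Fin (r i)))}
    (hS : (bananaStar k a r).IsScramble S) :
    (bananaStar k a r).scrambleOrder S ≤ 1 ∨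
      ∃ ℓ, (bananaStar k a r).scrambleOrder S ≤ bananaStarBound a r ℓ := by
  have hit_le_one : ∀ x, IsHittingSet S {x} → (bananaStar k a r).scrambleOrder S ≤ 1 :=
    fun x hx => (min_le_left _ _).trans ((hittingNumber_le_card hx).trans (by simp))
  set L := univ.filter fun w => {Sum.inr w} ∈ S
  rcases L.eq_empty_or_nonempty with hL | hL
  · refine Or.inl (hit_le_one _ (bananaStar_isHittingSet hS (mem_singleton_self _) fun w hw => ?_))
    exact absurd (mem_filter.mpr ⟨mem_univ w, hw⟩) (hL ▸ notMem_empty w)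
  obtain ⟨w₀, hw₀, hmax⟩ := L.exists_max_image Sigma.fst hL
  by_cases hall : ∀ Y ∈ S, Sum.inr w₀ ∈ Y
  · exact Or.inl (hit_le_one _
      (isHittingSet_iff.mpr fun Y hY => ⟨_, hall Y hY, mem_singleton_self _⟩))
  obtain ⟨Y, hY, hYw₀⟩ : ∃ Y ∈ S, Sum.inr w₀ ∉ Y := by simpa using hall
  refine Or.inr ⟨w₀.1, ?_⟩
  have hhit := hittingNumber_le_card (T := centerAndLeavesUpTo r w₀.1)
    (bananaStar_isHittingSet hS (mem_insert_self _ _)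
    fun w hw => inr_mem_centerAndLeavesUpTo.mpr (hmax w (mem_filter.mpr ⟨mem_univ _, hw⟩)))
  have hcut := bananaStar_eggCutNumber_le ha (mem_filter.mp hw₀).2 hY hYw₀
  rw [card_centerAndLeavesUpTo] at hhit
  calc (bananaStar k a r).scrambleOrder S
      ≤ min (hittingNumber S) ((bananaStar k a r).eggCutNumber S) := le_rfl
    _ ≤ min _ _ := min_le_min hhit hcut
    _ = bananaStarBound a r w₀.1 := by rw [bananaStarBound, Nat.mono_cast.map_min, min_comm]

theorem bananaStarBound_le_scrambleOrder (hanti : StrictAnti a) (ℓ : Fin k) :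
    (bananaStarBound a r ℓ : ℕ∞) ≤
      (bananaStar k a r).scrambleOrder ((centerAndLeavesUpTo r ℓ).image singleton) := by
  rw [scrambleOrder, hittingNumber_image_singleton, card_centerAndLeavesUpTo, bananaStarBound,
    Nat.mono_cast.map_min]
  refine le_min (min_le_right _ _) ((min_le_left _ _).trans (le_eggCutNumber fun c hc => ?_))
  obtain ⟨w, hw, hcw⟩ := bananaStar_exists_severed_bunch
    (fun _ hX => (mem_image.mp hX).imp fun _ hx => hx.2.symm) hc
  have hwℓ : a ℓ ≤ a w.1 :=
    hanti.antitone (inr_mem_centerAndLeavesUpTo.mp (by simpa using hw))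
  have hsum := add_le_sum_sum c (Sum.inl_ne_inr (a := ()) (b := w))
  rw [hc.1 (Sum.inr w)] at hsum
  omega

end BananaStar

end Multigraph

open Multigraph in
theorem banana_star_scrambleNumber_general
    (k : ℕ) (hk : 0 < k) (a r : Fin k → ℕ) (hanti : StrictAnti a)
    (ha : ∀ i, 1 ≤ a i) :
    (Multigraph.bananaStar k a r).scrambleNumber =
      ((Finset.univ.sup fun ℓ : Fin k =>
        min (a ℓ) (1 + ∑ i : Fin k, if i ≤ ℓ then r i else 0) : ℕ) : ℕ∞) := by
  change _ = ((univ.sup (bananaStarBound a r) : ℕ) : ℕ∞)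
  refine le_antisymm (sSup_le ?_) ?_
  · rintro _ ⟨S, hS, rfl⟩
    rcases bananaStar_scrambleOrder_le ha hS with h | ⟨ℓ, h⟩
    · exact h.trans (mod_cast (one_le_bananaStarBound ha ⟨0, hk⟩).trans (le_sup (mem_univ _)))
    · exact h.trans (mod_cast le_sup (mem_univ ℓ))
  · obtain ⟨ℓ, -, hℓ⟩ := exists_mem_eq_sup univ ⟨⟨0, hk⟩, mem_univ _⟩ (bananaStarBound a r)
    rw [hℓ]
    exact le_sSup_of_le ⟨_, isScramble_image_singleton _ _, rfl⟩
      (bananaStarBound_le_scrambleOrder hanti ℓ)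

open Multigraph in
/-- The scramble number of the banana star `S_{(a_1^{r_1}, …, a_k^{r_k})}`
(with `a_1 > a_2 > ⋯ > a_k ≥ 1` and all `r_i ≥ 1`) equals
`max_{1 ≤ ℓ ≤ k} min { a_ℓ, 1 + Σ_{i=1}^{ℓ} r_i }`. -/
theorem banana_star_scrambleNumber
    (k : ℕ) (hk : 0 < k) (a r : Fin k → ℕ) (hanti : StrictAnti a)
    (ha : ∀ i, 1 ≤ a i) (hr : ∀ i, 1 ≤ r i) :
    (Multigraph.bananaStar k a r).scrambleNumber =
      ((Finset.univ.sup fun ℓ : Fin k =>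
        min (a ℓ) (1 + ∑ i : Fin k, if i ≤ ℓ then r i else 0) : ℕ) : ℕ∞) :=
  banana_star_scrambleNumber_general k hk a r hanti ha
end
end
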